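/- The map G : (1/2, ∞)³ → ℝ³ defined by G(x2, x4, x6) = (2·x2·x4 − (1/2)·(x2/x4 + x4/x2), 2·x4·x6 − (1/2)·(x4/x6 + x6/x4), 2·x2·x6 − (1/2)·(x2/x6 + x6/x2)) is injective. -/
import Mathlib

private noncomputable def fG (a b : ℝ) : ℝ := 2*a*b - (1/2)*(a/b + b/a)

private lemma fG_comm (a b : ℝ) : fG a b = fG b a := by unfold fG; ring

private lemma fG_mono {a a' b : ℝ} (ha : 0 < a) (h : a < a') (hb : 1/2 < b) :
    fG a b < fG a' b := by
  have ha' : 0 < a' := ha.trans h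
  have hb0 : 0 < b := by linarith
  have key : fG a' b - fG a b
      = (a' - a) * (2*b - 1/(2*b)) + (b/2) * ((a'-a)/(a*a')) := by
    unfold fG; field_simp; ring
  have h1 : 0 < 2*b - 1/(2*b) := by
    rw [sub_pos, div_lt_iff₀ (by linarith)]
    nlinarith
  have h2 : 0 < (b/2) * ((a'-a)/(a*a')) :=
    mul_pos (by linarith) (div_pos (by linarith) (mul_pos ha ha'))
  nlinarith [mul_pos (sub_pos.mpr h) h1]

private lemma fG_mono2 {a b b' : ℝ} (ha : 1/2 < a) (hb : 0 < b) (h : b < b') :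
    fG a b < fG a b' := by
  rw [fG_comm a b, fG_comm a b']; exact fG_mono hb h ha

theorem stmt_3 :
    Set.InjOn
      (fun p : ℝ × ℝ × ℝ =>
        (2 * p.1 * p.2.1 - (1/2) * (p.1 / p.2.1 + p.2.1 / p.1),
         2 * p.2.1 * p.2.2 - (1/2) * (p.2.1 / p.2.2 + p.2.2 / p.2.1),
         2 * p.1 * p.2.2 - (1/2) * (p.1 / p.2.2 + p.2.2 / p.1)))
      {p : ℝ × ℝ × ℝ | 1/2 < p.1 ∧ 1/2 < p.2.1 ∧ 1/2 < p.2.2} := by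
  rintro ⟨a, b, c⟩ ⟨ha, hb, hc⟩ ⟨a', b', c'⟩ ⟨ha', hb', hc'⟩ heq
  simp only [Prod.mk.injEq] at heq
  obtain ⟨e1, e2, e3⟩ := heq
  have e1 : fG a b = fG a' b' := e1
  have e2 : fG b c = fG b' c' := e2
  have e3 : fG a c = fG a' c' := e3
  have ha0 : (0:ℝ) < a := by linarith
  have hb0 : (0:ℝ) < b := by linarith
  have hc0 : (0:ℝ) < c := by linarith
  have ha0' : (0:ℝ) < a' := by linarith
  have hb0' : (0:ℝ) < b' := by linarith
  have hc0' : (0:ℝ) < c' := by linarith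
  -- from a < a' derive contradiction
  have main : ∀ x y z x' y' z' : ℝ, 1/2 < x → 1/2 < y → 1/2 < z →
      1/2 < x' → 1/2 < y' → 1/2 < z' →
      fG x y = fG x' y' → fG y z = fG y' z' → fG x z = fG x' z' →
      x < x' → False := by
    intro x y z x' y' z' hx hy hz hx' hy' hz' f1 f2 f3 hlt
    have hby : y' < y := by
      by_contra hcon
      push_neg at hcon
      rcases hcon.eq_or_lt with h | h
      · subst h
        exact absurd f1 (ne_of_lt (fG_mono (by linarith) hlt hy))
      · have := (fG_mono2 hx (by linarith) h).trans (fG_mono (by linarith) hlt hy')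
        linarith [f1, this]
    have hcz : z' < z := by
      by_contra hcon
      push_neg at hcon
      rcases hcon.eq_or_lt with h | h
      · subst h
        exact absurd f3 (ne_of_lt (fG_mono (by linarith) hlt hz))
      · have := (fG_mono2 hx (by linarith) h).trans (fG_mono (by linarith) hlt hz')
        linarith [f3, this]
    have : fG y' z' < fG y z :=
      (fG_mono (by linarith) hby (by linarith)).trans' (fG_mono2 hy' (by linarith) hcz)
    linarith [f2, this]
  have haa : a = a' := by
    rcases lt_trichotomy a a' with h | h | h
    · exact absurd (main a b c a' b' c' ha hb hc ha' hb' hc' e1 e2 e3 h) not_false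
    · exact h
    · exact absurd (main a' b' c' a b c ha' hb' hc' ha hb hc e1.symm e2.symm e3.symm h) not_false
  subst haa
  have hbb : b = b' := by
    rcases lt_trichotomy b b' with h | h | h
    · exact absurd e1 (ne_of_lt (fG_mono2 ha hb0 h))
    · exact h
    · exact absurd e1.symm (ne_of_lt (fG_mono2 ha hb0' h))
  have hcc : c = c' := by
    rcases lt_trichotomy c c' with h | h | h
    · exact absurd e3 (ne_of_lt (fG_mono2 ha hc0 h))
    · exact h
    · exact absurd e3.symm (ne_of_lt (fG_mono2 ha hc0' h))
  simp [hbb, hcc]
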